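/- arXiv:2011.11795 — 2 statements merged into one kernel-verified Lean document; each statement's English description precedes it below -/
import Mathlib

section
/- Let s ≥ m be positive integers, and let S and X be independent ℕ-valued random variables such that: (1) S is unimodal with mode s and right-skewed, meaning P(S = s−i) ≤ P(S = s+i−1) for all 1 ≤ i ≤ s; (2) E(X) = m and the partial sums Σ_{i=1}^{k} (P(X ≤ m−i) − P(X ≥ m+i)) are non-negative for every k ∈ {1,...,m}. Then P(S ≥ s) ≥ P(S + X ≥ s + m). -/
/-!
Write `p j = P(S = j)`, `r u = P(m + u < X)` and `q u = P(X + u < m)`. It suffices to compare the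
two differences of the events `{s + m ≤ S + X}` and `{s ≤ S}`: by independence,
`P(S < s, s + m ≤ S + X) ≤ ∑_{u<s} p (s-1-u) r u` and
`P(s ≤ S, S + X < s + m) ≥ ∑_{u<s} p (s+u) q u`.
Right skewness replaces `p (s-1-u)` by `p (s+u)`, and since `u ↦ p (s+u)` is non-increasing, Abel
summation reduces the comparison to `∑_{u<k} r u ≤ ∑_{u<k} q u` for all `k`. For `k ≤ m` this is
the hypothesis on `X`; for `k > m` it follows from `E X = m`, which says that
`∑ r = E (X - m)⁺` equals `∑ q = E (m - X)⁺`.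
-/

open MeasureTheory
open scoped ProbabilityTheory ENNReal
open Finset

theorem Finset.sum_range_mul_le_sum_range_mul_of_antitone {α : Type*} [Semiring α]
    [PartialOrder α] [CanonicallyOrderedAdd α] [Sub α] [OrderedSub α] {d f g : ℕ → α}
    (hd : Antitone d) {n : ℕ} (h : ∀ k ≤ n, ∑ i ∈ range k, f i ≤ ∑ i ∈ range k, g i) :
    ∑ i ∈ range n, d i * f i ≤ ∑ i ∈ range n, d i * g i := by
  induction n generalizing d with
  | zero => simp
  | succ n ih =>
    have peel : ∀ F : ℕ → α, ∑ i ∈ range (n + 1), d i * F i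
        = ∑ i ∈ range n, (d i - d n) * F i + d n * ∑ i ∈ range (n + 1), F i := by
      intro F
      rw [mul_sum, sum_range_succ, sum_range_succ, ← add_assoc, ← sum_add_distrib]
      congr 1
      refine sum_congr rfl fun i hi => ?_
      rw [← add_mul, tsub_add_cancel_of_le (hd (mem_range.1 hi).le)]
    rw [peel f, peel g]
    gcongr ?_ + d n * ?_
    · exact ih (fun i j hij => tsub_le_tsub_right (hd hij) _) fun k hk => h k (by omega)
    · exact h (n + 1) le_rfl

theorem ENNReal.tsum_ite_lt_eq_natCast (y : ℕ) : ∑' n : ℕ, (if n < y then 1 else 0 : ℝ≥0∞) = y := by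
  rw [tsum_eq_sum (s := range y) fun n hn => if_neg (by simpa using hn),
    sum_congr rfl fun n hn => if_pos (mem_range.1 hn)]
  simp

theorem lintegral_natCast_eq_tsum_measure_lt {Ω : Type*} [MeasurableSpace Ω] {μ : Measure Ω}
    {Y : Ω → ℕ} (hY : Measurable Y) :
    ∫⁻ ω, (Y ω : ℝ≥0∞) ∂μ = ∑' n : ℕ, μ {ω | n < Y ω} := by
  have hmeas : ∀ n : ℕ, MeasurableSet {ω | n < Y ω} := fun n => hY measurableSet_Ioi
  calc ∫⁻ ω, (Y ω : ℝ≥0∞) ∂μ = ∫⁻ ω, ∑' n : ℕ, {ω | n < Y ω}.indicator 1 ω ∂μ := by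
        simp only [Set.indicator_apply, Set.mem_ofPred_eq, Pi.one_apply,
          ENNReal.tsum_ite_lt_eq_natCast]
    _ = ∑' n : ℕ, μ {ω | n < Y ω} := by
        rw [lintegral_tsum fun n => (measurable_one.indicator (hmeas n)).aemeasurable]
        simp_rw [lintegral_indicator_one (hmeas _)]

theorem tsum_measure_lt_eq_tsum_measure_gt_of_lintegral_eq {Ω : Type*} [MeasurableSpace Ω]
    {μ : Measure Ω} [IsProbabilityMeasure μ] {X : Ω → ℕ} (hX : Measurable X) {m : ℕ}
    (hmean : ∫⁻ ω, (X ω : ℝ≥0∞) ∂μ = m) :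
    ∑' u : ℕ, μ {ω | m + u < X ω} = ∑' u : ℕ, μ {ω | X ω + u < m} := by
  have hsplit : ∫⁻ ω, (X ω : ℝ≥0∞) ∂μ + ∫⁻ ω, ((m - X ω : ℕ) : ℝ≥0∞) ∂μ
      = ∫⁻ _, (m : ℝ≥0∞) ∂μ + ∫⁻ ω, ((X ω - m : ℕ) : ℝ≥0∞) ∂μ := by
    rw [← lintegral_add_left (by fun_prop), ← lintegral_add_left measurable_const]
    congr with ω
    norm_cast
    omega
  rw [hmean, lintegral_const, measure_univ, mul_one,
    ENNReal.add_right_inj (ENNReal.natCast_ne_top m),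
    lintegral_natCast_eq_tsum_measure_lt (by fun_prop),
    lintegral_natCast_eq_tsum_measure_lt (by fun_prop)] at hsplit
  convert hsplit.symm using 4 with u u <;> ext ω <;> simp only [Set.mem_ofPred_eq] <;> omega

theorem lintegral_natCast_eq_of_integral_eq {Ω : Type*} [MeasurableSpace Ω] {μ : Measure Ω}
    {X : Ω → ℕ} (hint : Integrable (fun ω => (X ω : ℝ)) μ) {m : ℕ}
    (hmean : ∫ ω, (X ω : ℝ) ∂μ = m) : ∫⁻ ω, (X ω : ℝ≥0∞) ∂μ = m := by
  have h := ofReal_integral_eq_lintegral_ofReal hint (.of_forall fun ω => by positivity)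
  simpa [hmean] using h.symm

theorem measure_le_measure_of_sdiff_le {Ω : Type*} [MeasurableSpace Ω] {μ : Measure Ω}
    {s t : Set Ω} (hs : MeasurableSet s) (ht : MeasurableSet t) (h : μ (t \ s) ≤ μ (s \ t)) :
    μ t ≤ μ s := by
  rw [← measure_inter_add_sdiff t hs, ← measure_inter_add_sdiff s ht, Set.inter_comm]
  gcongr

theorem ProbabilityTheory.IndepFun.measure_biUnion_inter_eq_sum_mul {Ω ι : Type*}
    [MeasurableSpace Ω] {μ : Measure Ω} {S X : Ω → ℕ} (hindep : IndepFun S X μ)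
    (hS : Measurable S) (hX : Measurable X) {t : Finset ι} {v : ι → ℕ} (hv : Set.InjOn v t)
    (T : ι → Set ℕ) :
    μ (⋃ i ∈ t, {ω | S ω = v i} ∩ {ω | X ω ∈ T i})
      = ∑ i ∈ t, μ {ω | S ω = v i} * μ {ω | X ω ∈ T i} := by
  rw [measure_biUnion_finset]
  · exact sum_congr rfl fun i _ =>
      hindep.measure_inter_preimage_eq_mul {v i} (T i) (measurableSet_singleton _) .of_discrete
  · intro i hi j hj hij
    exact Set.disjoint_left.2 fun ω hωi hωj => hij (hv hi hj (hωi.1.symm.trans hωj.1))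
  · exact fun i _ => (hS (measurableSet_singleton _)).inter (hX .of_discrete)

theorem sum_range_le_sum_range_of_tsum_eq {r q : ℕ → ℝ≥0∞} {m : ℕ} (hq : ∀ u, m ≤ u → q u = 0)
    (htsum : ∑' u, r u = ∑' u, q u) (hle : ∀ k ≤ m, ∑ u ∈ range k, r u ≤ ∑ u ∈ range k, q u)
    (k : ℕ) : ∑ u ∈ range k, r u ≤ ∑ u ∈ range k, q u := by
  rcases le_total k m with hk | hk
  · exact hle k hk
  · calc ∑ u ∈ range k, r u ≤ ∑' u, r u := ENNReal.sum_le_tsum _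
      _ = ∑' u, q u := htsum
      _ = ∑ u ∈ range k, q u := tsum_eq_sum fun u hu => hq u (by simp at hu; omega)

theorem sum_range_measure_lt_le_of_sum_Icc_nonneg {Ω : Type*} [MeasurableSpace Ω]
    {μ : Measure Ω} [IsFiniteMeasure μ] {X : Ω → ℕ} {m : ℕ}
    (hsum : ∀ k ∈ Icc 1 m,
      0 ≤ ∑ i ∈ Icc 1 k, ((μ {ω | X ω ≤ m - i}).toReal - (μ {ω | m + i ≤ X ω}).toReal))
    (k : ℕ) (hk : k ≤ m) :
    ∑ u ∈ range k, μ {ω | m + u < X ω} ≤ ∑ u ∈ range k, μ {ω | X ω + u < m} := by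
  rcases k.eq_zero_or_pos with rfl | hk0
  · simp
  have h := hsum k (mem_Icc.2 ⟨hk0, hk⟩)
  rw [← Ico_add_one_right_eq_Icc, sum_Ico_eq_sum_range, Nat.add_sub_cancel, sum_sub_distrib,
    sub_nonneg] at h
  rw [← ENNReal.toReal_le_toReal (ENNReal.sum_ne_top.2 fun _ _ => by finiteness)
      (ENNReal.sum_ne_top.2 fun _ _ => by finiteness),
    ENNReal.toReal_sum (by finiteness), ENNReal.toReal_sum (by finiteness)]
  convert h using 4 with u hu u hu <;> ext ω <;> simp only [Set.mem_ofPred_eq] <;>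
    simp only [mem_range] at hu <;> omega

section Independent

variable {Ω : Type*} [MeasurableSpace Ω] {μ : Measure Ω} {S X : Ω → ℕ}
  (hindep : ProbabilityTheory.IndepFun S X μ) (hS : Measurable S) (hX : Measurable X) (s m : ℕ)
include hindep hS hX

theorem measure_setOf_add_le_sdiff_le_sum :
    μ ({ω | s + m ≤ S ω + X ω} \ {ω | s ≤ S ω})
      ≤ ∑ u ∈ range s, μ {ω | S ω = s - (u + 1)} * μ {ω | m + u < X ω} := by
  calc μ ({ω | s + m ≤ S ω + X ω} \ {ω | s ≤ S ω})
      ≤ μ (⋃ u ∈ range s, {ω | S ω = s - (u + 1)} ∩ {ω | X ω ∈ {x | m + u < x}}) := by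
        refine measure_mono fun ω ⟨hB, hA⟩ => ?_
        simp only [Set.mem_ofPred_eq, not_le] at hB hA
        refine Set.mem_biUnion (mem_coe.2 (mem_range.2 (by omega : s - 1 - S ω < s))) ?_
        simp only [Set.mem_inter_iff, Set.mem_ofPred_eq]
        omega
    _ = ∑ u ∈ range s, μ {ω | S ω = s - (u + 1)} * μ {ω | m + u < X ω} :=
        hindep.measure_biUnion_inter_eq_sum_mul hS hX
          (fun u hu v hv h => by simp only [coe_range, Set.mem_Iio] at hu hv; omega) _

theorem sum_le_measure_setOf_le_sdiff :
    ∑ u ∈ range s, μ {ω | S ω = s + u} * μ {ω | X ω + u < m}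
      ≤ μ ({ω | s ≤ S ω} \ {ω | s + m ≤ S ω + X ω}) := by
  calc ∑ u ∈ range s, μ {ω | S ω = s + u} * μ {ω | X ω + u < m}
      = μ (⋃ u ∈ range s, {ω | S ω = s + u} ∩ {ω | X ω ∈ {x | x + u < m}}) :=
        (hindep.measure_biUnion_inter_eq_sum_mul (v := fun u => s + u) hS hX
          (fun u _ v _ h => by simpa using h) fun u => {x | x + u < m}).symm
    _ ≤ μ ({ω | s ≤ S ω} \ {ω | s + m ≤ S ω + X ω}) := by
        refine measure_mono (Set.iUnion₂_subset fun u _ ω ⟨hSu, hXu⟩ => ?_)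
        simp only [Set.mem_ofPred_eq] at hSu hXu
        simp only [Set.mem_sdiff, Set.mem_ofPred_eq]
        omega

end Independent

theorem stmt3_general {Ω : Type*} [MeasureSpace Ω] [IsProbabilityMeasure (ℙ : Measure Ω)]
    (S X : Ω → ℕ) (hS : Measurable S) (hX : Measurable X)
    (hindep : ProbabilityTheory.IndepFun S X ℙ)
    (s m : ℕ)
    (hmono₂ : ∀ i j : ℕ, s ≤ i → i ≤ j → ℙ {ω | S ω = j} ≤ ℙ {ω | S ω = i})
    (hskew : ∀ i ∈ Finset.Icc 1 s, ℙ {ω | S ω = s - i} ≤ ℙ {ω | S ω = s + i - 1})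
    (hint : Integrable (fun ω => (X ω : ℝ))) (hmean : (∫ ω, (X ω : ℝ)) = m)
    (hL2 : ∀ k ∈ Finset.Icc 1 m, 0 ≤ ∑ i ∈ Finset.Icc 1 k,
      ((ℙ {ω | X ω ≤ m - i}).toReal - (ℙ {ω | m + i ≤ X ω}).toReal)) :
    ℙ {ω | s + m ≤ S ω + X ω} ≤ ℙ {ω | s ≤ S ω} := by
  have hpartial (k : ℕ) :
      ∑ u ∈ range k, ℙ {ω | m + u < X ω} ≤ ∑ u ∈ range k, ℙ {ω | X ω + u < m} :=
    sum_range_le_sum_range_of_tsum_eq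
      (fun u hu => by simp only [show ∀ x, ¬ x + u < m by omega, Set.ofPred_false, measure_empty])
      (tsum_measure_lt_eq_tsum_measure_gt_of_lintegral_eq hX
        (lintegral_natCast_eq_of_integral_eq hint hmean))
      (sum_range_measure_lt_le_of_sum_Icc_nonneg hL2) k
  refine measure_le_measure_of_sdiff_le (hS measurableSet_Ici)
    (measurableSet_le measurable_const (hS.add hX)) ?_
  calc ℙ ({ω | s + m ≤ S ω + X ω} \ {ω | s ≤ S ω})
      ≤ ∑ u ∈ range s, ℙ {ω | S ω = s - (u + 1)} * ℙ {ω | m + u < X ω} :=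
        measure_setOf_add_le_sdiff_le_sum hindep hS hX s m
    _ ≤ ∑ u ∈ range s, ℙ {ω | S ω = s + u} * ℙ {ω | m + u < X ω} := by
        gcongr ∑ u ∈ range s, ?_ * _ with u hu
        simpa using hskew (u + 1) (by simp at hu ⊢; omega)
    _ ≤ ∑ u ∈ range s, ℙ {ω | S ω = s + u} * ℙ {ω | X ω + u < m} :=
        sum_range_mul_le_sum_range_mul_of_antitone
          (fun u v huv => hmono₂ (s + u) (s + v) (by omega) (by omega)) fun k _ => hpartial k
    _ ≤ ℙ ({ω | s ≤ S ω} \ {ω | s + m ≤ S ω + X ω}) :=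
        sum_le_measure_setOf_le_sdiff hindep hS hX s m

theorem stmt3 {Ω : Type*} [MeasureSpace Ω] [IsProbabilityMeasure (ℙ : Measure Ω)]
    (S X : Ω → ℕ) (hS : Measurable S) (hX : Measurable X)
    (hindep : ProbabilityTheory.IndepFun S X ℙ)
    (s m : ℕ) (hm : 0 < m) (hsm : m ≤ s)
    (hmono₁ : ∀ i j : ℕ, i ≤ j → j ≤ s → ℙ {ω | S ω = i} ≤ ℙ {ω | S ω = j})
    (hmono₂ : ∀ i j : ℕ, s ≤ i → i ≤ j → ℙ {ω | S ω = j} ≤ ℙ {ω | S ω = i})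
    (hskew : ∀ i ∈ Finset.Icc 1 s, ℙ {ω | S ω = s - i} ≤ ℙ {ω | S ω = s + i - 1})
    (hint : Integrable (fun ω => (X ω : ℝ))) (hmean : (∫ ω, (X ω : ℝ)) = m)
    (hL2 : ∀ k ∈ Finset.Icc 1 m, 0 ≤ ∑ i ∈ Finset.Icc 1 k,
      ((ℙ {ω | X ω ≤ m - i}).toReal - (ℙ {ω | m + i ≤ X ω}).toReal)) :
    ℙ {ω | s + m ≤ S ω + X ω} ≤ ℙ {ω | s ≤ S ω} :=
  stmt3_general S X hS hX hindep s m hmono₂ hskew hint hmean hL2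
end

section
/- Fix an integer m ≥ 3 and let X ∼ Poisson(m). Define α_i := P(X ≤ m−i) − P(X ≥ m+i) for i ∈ {1,...,m}. Then the sequence {α_i} changes sign at most once: there exists ℓ ∈ {1,...,m} such that α_i ≥ 0 for i ≤ ℓ and α_i ≤ 0 for i > ℓ. -/
/-!
Write `p_k = P(X = k)` and `d_j = p_{m-j} - p_{m+j}`, so that `α_i - α_{i+1} = d_i`. When `j`
increases, the ratio `p_{m+j} / p_{m-j}` gets multiplied by `m² / ((m - j) (m + j + 1))`, which is
`< 1` exactly while `j (j + 1) < m`; hence once `d_j < 0` it stays negative, and `α` first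
decreases and then increases. Every `α_j` is therefore at most `max α_i α_m` for `i ≤ j`. Finally
`α_m ≤ p_0 - p_{2m} ≤ 0` because `(2m)! ≤ m^{2m}`, and `α_1 = ∑ d_j ≥ 0`: if `d` turns negative
after `c ≥ 1`, then `0 = E[m - X] = ∑ j d_j ≤ c ∑ d_j`.
-/

open Finset ProbabilityTheory MeasureTheory
open scoped NNReal Nat

section SignChange

variable {a : ℕ → ℝ}

lemma lt_succ_of_lt_succ_of_le {n k l : ℕ}
    (hrise : ∀ k, k + 2 ≤ n → a k < a (k + 1) → a (k + 1) < a (k + 2))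
    (hk : a k < a (k + 1)) (hkl : k ≤ l) (hl : l < n) : a l < a (l + 1) := by
  induction l, hkl using Nat.le_induction with
  | base => exact hk
  | succ l hkl ih => exact hrise l (by omega) (ih (by omega))

lemma le_of_forall_succ_le {i j : ℕ} (hij : i ≤ j) (h : ∀ l, i ≤ l → l < j → a (l + 1) ≤ a l) :
    a j ≤ a i := by
  induction j, hij using Nat.le_induction with
  | base => exact le_rfl
  | succ j hij ih => exact (h j hij (by omega)).trans (ih fun l hil hlj => h l hil (by omega))

lemma le_of_forall_le_succ {j n : ℕ} (hjn : j ≤ n) (h : ∀ l, j ≤ l → l < n → a l ≤ a (l + 1)) :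
    a j ≤ a n :=
  neg_le_neg_iff.mp <|
    le_of_forall_succ_le (a := fun l => -a l) hjn fun l hjl hln => neg_le_neg (h l hjl hln)

lemma le_max_of_rise_persists {n : ℕ}
    (hrise : ∀ k, k + 2 ≤ n → a k < a (k + 1) → a (k + 1) < a (k + 2))
    {i j : ℕ} (hij : i ≤ j) (hjn : j ≤ n) : a j ≤ max (a i) (a n) := by
  by_cases hup : ∃ k, i ≤ k ∧ k < j ∧ a k < a (k + 1)
  · obtain ⟨k, -, hkj, hk⟩ := hup
    exact le_max_of_le_right <| le_of_forall_le_succ hjn fun l hjl hln =>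
      (lt_succ_of_lt_succ_of_le hrise hk (by omega) hln).le
  · push Not at hup
    exact le_max_of_le_left <| le_of_forall_succ_le hij fun l hil hlj => hup l hil hlj

lemma exists_single_sign_change {n : ℕ} (hn : 1 ≤ n) (h1 : 0 ≤ a 1)
    (hneg : ∀ i j, 1 ≤ i → i ≤ j → j ≤ n → a i < 0 → a j ≤ 0) :
    ∃ ℓ ∈ Icc 1 n, (∀ i ∈ Icc 1 n, i ≤ ℓ → 0 ≤ a i) ∧ (∀ i ∈ Icc 1 n, ℓ < i → a i ≤ 0) := by
  classical
  by_cases hex : ∃ i, (1 ≤ i ∧ i ≤ n) ∧ a i < 0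
  · have hfind := Nat.find_spec hex
    have h2 : 2 ≤ Nat.find hex := by
      by_contra! h
      have : Nat.find hex = 1 := by omega
      rw [this] at hfind
      exact hfind.2.not_ge h1
    refine ⟨Nat.find hex - 1, mem_Icc.2 ⟨by omega, by omega⟩, fun i hi hiℓ => ?_,
      fun i hi hℓi => ?_⟩
    · exact not_lt.1 fun h => Nat.find_min hex (by omega) ⟨mem_Icc.1 hi, h⟩
    · exact hneg _ i hfind.1.1 (by omega) (mem_Icc.1 hi).2 hfind.2
  · push Not at hex
    exact ⟨n, mem_Icc.2 ⟨hn, le_rfl⟩, fun i hi _ => hex i (mem_Icc.1 hi),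
      fun i hi hni => absurd (mem_Icc.1 hi).2 (by omega)⟩

lemma nonneg_of_hasSum_of_neg_persists {d : ℕ → ℝ} {s : ℝ} (hs : HasSum d s)
    (hmoment : HasSum (fun j : ℕ => (j : ℝ) * d j) 0) (h1 : 0 ≤ d 1)
    (hpersist : ∀ j, d j < 0 → d (j + 1) < 0) : 0 ≤ s := by
  classical
  by_cases hex : ∃ j, d j < 0
  · set c := Nat.find hex - 1
    have hneg : ∀ j, d j < 0 → ∀ l, j ≤ l → d l < 0 := fun j hj l hjl => by
      induction l, hjl using Nat.le_induction with
      | base => exact hj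
      | succ l _ ih => exact hpersist l ih
    have hc : 1 ≤ c := by
      by_contra! h
      have : Nat.find hex ≤ 1 := by omega
      exact h1.not_gt (hneg _ (Nat.find_spec hex) 1 this)
    have hsign : ∀ j : ℕ, ((j : ℝ) - c) * d j ≤ 0 := fun j => by
      rcases le_or_gt j c with hjc | hcj
      · exact mul_nonpos_of_nonpos_of_nonneg (sub_nonpos.2 (by exact_mod_cast hjc))
          (not_lt.1 (Nat.find_min hex (by omega)))
      · exact mul_nonpos_of_nonneg_of_nonpos (sub_nonneg.2 (by exact_mod_cast hcj.le))
          (hneg _ (Nat.find_spec hex) j (by omega)).le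
    have hcs : 0 - c * s ≤ 0 :=
      hasSum_le (fun j => (sub_mul _ _ _).symm.trans_le (hsign j))
        (hmoment.sub (hs.mul_left (c : ℝ))) hasSum_zero
    have : (0 : ℝ) < c := by exact_mod_cast hc
    nlinarith
  · push Not at hex
    exact hasSum_le hex hasSum_zero hs

end SignChange

lemma hasSum_reflect_add_shift {f g : ℕ → ℝ} {t : ℝ} (hg : HasSum g t) (m : ℕ) :
    HasSum (fun j => (if j ≤ m then f (m - j) else 0) + g (m + j))
      (∑ k ∈ range (m + 1), f k + (t - ∑ k ∈ range m, g k)) := by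
  have hfin : HasSum (fun j => if j ≤ m then f (m - j) else 0) (∑ k ∈ range (m + 1), f k) := by
    have h := hasSum_sum_of_ne_finset_zero (L := .unconditional ℕ) (s := range (m + 1))
      (f := fun j => if j ≤ m then f (m - j) else 0) fun j hj => if_neg (by simp at hj; omega)
    rw [sum_congr rfl fun j hj => if_pos (by simp at hj; omega)] at h
    rwa [← sum_range_reflect f, Nat.add_sub_cancel]
  have htail : HasSum (fun j => g (m + j)) (t - ∑ k ∈ range m, g k) := by
    simpa only [add_comm m] using (hasSum_nat_add_iff' m).2 hg
  exact hfin.add htail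

section Measure

variable {μ : Measure ℕ}

lemma measureReal_setOf_le_eq_sum [IsFiniteMeasure μ] (K : ℕ) :
    μ.real {n | n ≤ K} = ∑ k ∈ range (K + 1), μ.real {k} := by
  rw [sum_measureReal_singleton]
  congr 1
  ext n
  simp

lemma measureReal_setOf_ge_eq_one_sub_sum [IsProbabilityMeasure μ] (K : ℕ) :
    μ.real {n | K ≤ n} = 1 - ∑ k ∈ range K, μ.real {k} := by
  rw [sum_measureReal_singleton, ← probReal_compl_eq_one_sub (by measurability)]
  congr 1
  ext n
  simp

end Measure

lemma two_mul_pow_le_succ_pow {m : ℕ} (hm : 1 ≤ m) : 2 * m ^ m ≤ (m + 1) ^ m := by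
  have hm' : (0 : ℝ) < m := by exact_mod_cast hm
  have h := one_add_mul_le_pow (a := (1 : ℝ) / m) (by linarith [one_div_pos.2 hm']) m
  rw [mul_one_div_cancel hm'.ne', one_add_one_eq_two, one_add_div hm'.ne', div_pow,
    le_div_iff₀ (by positivity)] at h
  exact_mod_cast h

lemma factorial_two_mul_le_pow {m : ℕ} (hm : 3 ≤ m) : (2 * m)! ≤ m ^ (2 * m) := by
  induction m, hm using Nat.le_induction with
  | base => decide
  | succ m hm ih =>
    have hbern := two_mul_pow_le_succ_pow (m := m) (by omega)
    calc (2 * (m + 1))! = (2 * m + 2) * ((2 * m + 1) * (2 * m)!) := by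
          rw [show 2 * (m + 1) = 2 * m + 1 + 1 by ring, Nat.factorial_succ, Nat.factorial_succ]
      _ ≤ (2 * m + 2) * ((2 * m + 1) * m ^ (2 * m)) := by gcongr
      _ = ((2 * m + 2) * (2 * m + 1)) * (m ^ m * m ^ m) := by ring
      _ ≤ (4 * (m + 1) ^ 2) * (m ^ m * m ^ m) := Nat.mul_le_mul_right _ (by nlinarith)
      _ = (m + 1) ^ 2 * (2 * m ^ m) * (2 * m ^ m) := by ring
      _ ≤ (m + 1) ^ 2 * (m + 1) ^ m * (m + 1) ^ m := by gcongr
      _ = (m + 1) ^ (2 * (m + 1)) := by ring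

section Poisson

lemma poissonMeasure_real_singleton_succ (r : ℝ≥0) (n : ℕ) :
    ((n : ℝ) + 1) * Po(r).real {n + 1} = r * Po(r).real {n} := by
  simp only [poissonMeasure_real_singleton, Nat.factorial_succ, Nat.cast_mul, pow_succ]
  field_simp
  push_cast
  ring

lemma hasSum_poissonMeasure_real_singleton (r : ℝ≥0) :
    HasSum (fun n => Po(r).real {n}) 1 := by
  simpa only [poissonMeasure_real_singleton] using hasSum_one_poissonMeasure r

lemma hasSum_mul_poissonMeasure_real_singleton (r : ℝ≥0) :
    HasSum (fun n : ℕ => (n : ℝ) * Po(r).real {n}) r := by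
  rw [← hasSum_nat_add_iff' 1]
  simpa [poissonMeasure_real_singleton_succ] using
    (hasSum_poissonMeasure_real_singleton r).mul_left (r : ℝ)

lemma poissonMeasure_real_succ_le_of_le {r : ℝ≥0} (hr : 0 < r) {a b : ℕ}
    (hab : (r : ℝ) ^ 2 ≤ (a + 1) * (b + 1)) (h : Po(r).real {b} ≤ Po(r).real {a + 1}) :
    Po(r).real {b + 1} ≤ Po(r).real {a} := by
  have ha := poissonMeasure_real_singleton_succ r a
  have hb := poissonMeasure_real_singleton_succ r b
  have hpos : (0 : ℝ) < r * ((a + 1) * (b + 1)) := by positivity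
  refine le_of_mul_le_mul_left ?_ hpos
  calc (r : ℝ) * ((a + 1) * (b + 1)) * Po(r).real {b + 1}
      = r ^ 2 * ((a + 1) * Po(r).real {b}) := by linear_combination (r * (a + 1) : ℝ) * hb
    _ ≤ r ^ 2 * ((a + 1) * Po(r).real {a + 1}) := by gcongr
    _ = r ^ 2 * (r * Po(r).real {a}) := by rw [ha]
    _ ≤ (a + 1) * (b + 1) * (r * Po(r).real {a}) := by gcongr
    _ = r * ((a + 1) * (b + 1)) * Po(r).real {a} := by ring

lemma poissonMeasure_real_lt_succ_of_lt {r : ℝ≥0} (hr : 0 < r) {a b : ℕ}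
    (hab : ((a : ℝ) + 1) * (b + 1) ≤ r ^ 2) (h : Po(r).real {a + 1} < Po(r).real {b}) :
    Po(r).real {a} < Po(r).real {b + 1} := by
  have ha := poissonMeasure_real_singleton_succ r a
  have hb := poissonMeasure_real_singleton_succ r b
  have hpos : (0 : ℝ) < r * r := by positivity
  refine lt_of_mul_lt_mul_left ?_ hpos.le
  calc (r : ℝ) * r * Po(r).real {a}
      = r * ((a + 1) * Po(r).real {a + 1}) := by rw [ha]; ring
    _ < r * ((a + 1) * Po(r).real {b}) := by gcongr
    _ = (a + 1) * (b + 1) * Po(r).real {b + 1} := by linear_combination -((a : ℝ) + 1) * hb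
    _ ≤ r * r * Po(r).real {b + 1} := by
        rw [← sq]
        gcongr

end Poisson

section IntegerRate

variable {m : ℕ}

lemma poissonMeasure_real_add_le_sub (hm : 0 < m) {j : ℕ} (hj : j * (j + 1) ≤ m) :
    Po(m).real {m + j} ≤ Po(m).real {m - j} := by
  induction j with
  | zero => simp
  | succ j ih =>
    have hjm : j + 1 ≤ m := by nlinarith
    have hsub : m - j = m - (j + 1) + 1 := by omega
    refine poissonMeasure_real_succ_le_of_le (a := m - (j + 1)) (b := m + j) (by exact_mod_cast hm)
      ?_ (hsub ▸ ih (by nlinarith))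
    have hj' : ((j : ℝ) + 1) * (j + 1 + 1) ≤ m := by exact_mod_cast hj
    push_cast [Nat.cast_sub hjm]
    nlinarith

lemma poissonMeasure_real_sub_lt_add_succ (hm : 0 < m) {j : ℕ} (hjm : j + 1 ≤ m)
    (h : Po(m).real {m - j} < Po(m).real {m + j}) :
    Po(m).real {m - (j + 1)} < Po(m).real {m + (j + 1)} := by
  have hsub : m - j = m - (j + 1) + 1 := by omega
  have hj : (m : ℝ) < j * (j + 1) := by
    by_contra! h'
    exact (poissonMeasure_real_add_le_sub hm (j := j) (by exact_mod_cast h')).not_gt h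
  refine poissonMeasure_real_lt_succ_of_lt (a := m - (j + 1)) (b := m + j) (by exact_mod_cast hm)
    ?_ (hsub ▸ h)
  push_cast [Nat.cast_sub hjm]
  nlinarith

/-- The `d_j` above; the `if` keeps truncated subtraction from turning `P(X = m - j)` into
`P(X = 0)` when `j > m`. -/
noncomputable def poissonPMFGap (m j : ℕ) : ℝ :=
  (if j ≤ m then Po(m).real {m - j} else 0) - Po(m).real {m + j}

/-- The paper's `α_i`. -/
noncomputable def poissonTailGap (m i : ℕ) : ℝ :=
  Po(m).real {n | n ≤ m - i} - Po(m).real {n | m + i ≤ n}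

lemma poissonPMFGap_succ_neg (hm : 0 < m) {j : ℕ} (h : poissonPMFGap m j < 0) :
    poissonPMFGap m (j + 1) < 0 := by
  unfold poissonPMFGap at *
  by_cases hjm : j + 1 ≤ m
  · rw [if_pos hjm]
    rw [if_pos (by omega)] at h
    linarith [poissonMeasure_real_sub_lt_add_succ hm hjm (by linarith)]
  · rw [if_neg hjm]
    linarith [poissonMeasure_real_singleton_pos (m + (j + 1)) (r := m) (by exact_mod_cast hm)]

lemma poissonPMFGap_one_nonneg (hm : 2 ≤ m) : 0 ≤ poissonPMFGap m 1 := by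
  rw [poissonPMFGap, if_pos (by omega), sub_nonneg]
  exact poissonMeasure_real_add_le_sub (by omega) (by omega)

lemma poissonTailGap_eq_sum (m i : ℕ) :
    poissonTailGap m i =
      ∑ k ∈ range (m - i + 1), Po(m).real {k} + ∑ k ∈ range (m + i), Po(m).real {k} - 1 := by
  rw [poissonTailGap, measureReal_setOf_le_eq_sum, measureReal_setOf_ge_eq_one_sub_sum]
  ring

lemma poissonTailGap_sub_succ {i : ℕ} (hi : i < m) :
    poissonTailGap m i - poissonTailGap m (i + 1) = poissonPMFGap m i := by
  rw [poissonTailGap_eq_sum, poissonTailGap_eq_sum, poissonPMFGap, if_pos hi.le,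
    show m - i + 1 = m - (i + 1) + 1 + 1 by omega, sum_range_succ _ (m - (i + 1) + 1),
    ← add_assoc, sum_range_succ _ (m + i), show m - (i + 1) + 1 = m - i by omega]
  ring

lemma hasSum_poissonPMFGap (m : ℕ) : HasSum (poissonPMFGap m) (poissonTailGap m 0) := by
  convert hasSum_reflect_add_shift (f := fun k => Po(m).real {k})
    (hasSum_poissonMeasure_real_singleton m).neg m using 1
  · ext j
    simp [poissonPMFGap, sub_eq_add_neg]
  · rw [poissonTailGap_eq_sum, Nat.sub_zero, add_zero, sum_neg_distrib]
    ring

lemma hasSum_mul_poissonPMFGap (m : ℕ) :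
    HasSum (fun j : ℕ => (j : ℝ) * poissonPMFGap m j) 0 := by
  have hcentered : HasSum (fun k : ℕ => ((m : ℝ) - k) * Po(m).real {k}) 0 := by
    simpa [sub_mul] using ((hasSum_poissonMeasure_real_singleton m).mul_left (m : ℝ)).sub
      (hasSum_mul_poissonMeasure_real_singleton m)
  convert hasSum_reflect_add_shift (f := fun k : ℕ => ((m : ℝ) - k) * Po(m).real {k}) hcentered m
    using 1
  · ext j
    unfold poissonPMFGap
    split_ifs with hj
    · push_cast [hj, Nat.cast_sub hj]
      ring
    · push_cast
      ring
  · simp [sum_range_succ]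

lemma poissonTailGap_one_nonneg (hm : 2 ≤ m) : 0 ≤ poissonTailGap m 1 := by
  have h := poissonTailGap_sub_succ (m := m) (i := 0) (by omega)
  rw [show poissonPMFGap m 0 = 0 by simp [poissonPMFGap], sub_eq_zero] at h
  exact h ▸ nonneg_of_hasSum_of_neg_persists (hasSum_poissonPMFGap m) (hasSum_mul_poissonPMFGap m)
    (poissonPMFGap_one_nonneg hm) fun j => poissonPMFGap_succ_neg (by omega)

lemma poissonTailGap_self_nonpos (hm : 3 ≤ m) : poissonTailGap m m ≤ 0 := by
  have hpmf : Po(m).real {0} ≤ Po(m).real {2 * m} := by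
    rw [poissonMeasure_real_singleton, poissonMeasure_real_singleton, pow_zero, Nat.factorial_zero,
      Nat.cast_one, mul_one, div_one, mul_div_assoc]
    exact le_mul_of_one_le_right (by positivity)
      ((one_le_div (by positivity)).2 (by exact_mod_cast factorial_two_mul_le_pow hm))
  have hsum := sum_le_hasSum (range (2 * m + 1)) (fun _ _ => measureReal_nonneg)
    (hasSum_poissonMeasure_real_singleton m)
  rw [sum_range_succ] at hsum
  rw [poissonTailGap_eq_sum, Nat.sub_self, sum_range_one, ← two_mul]
  linarith

lemma poissonTailGap_lt_succ_of_lt (hm : 0 < m) {k : ℕ} (hk : k + 2 ≤ m)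
    (h : poissonTailGap m k < poissonTailGap m (k + 1)) :
    poissonTailGap m (k + 1) < poissonTailGap m (k + 2) := by
  have hk₀ := poissonTailGap_sub_succ (m := m) (i := k) (by omega)
  have hk₁ := poissonTailGap_sub_succ (m := m) (i := k + 1) (by omega)
  linarith [poissonPMFGap_succ_neg hm (j := k) (by linarith)]

end IntegerRate

theorem stmt12 (m : ℕ) (hm : 3 ≤ m) :
    ∃ ℓ ∈ Finset.Icc 1 m,
      (∀ i ∈ Finset.Icc 1 m, i ≤ ℓ →
        0 ≤ (poissonMeasure (m : ℝ≥0) {n : ℕ | n ≤ m - i}).toReal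
          - (poissonMeasure (m : ℝ≥0) {n : ℕ | m + i ≤ n}).toReal) ∧
      (∀ i ∈ Finset.Icc 1 m, ℓ < i →
        (poissonMeasure (m : ℝ≥0) {n : ℕ | n ≤ m - i}).toReal
          - (poissonMeasure (m : ℝ≥0) {n : ℕ | m + i ≤ n}).toReal ≤ 0) := by
  have hsign : ∀ i j, 1 ≤ i → i ≤ j → j ≤ m → poissonTailGap m i < 0 → poissonTailGap m j ≤ 0 :=
    fun i j _ hij hjm hi => calc
      poissonTailGap m j ≤ max (poissonTailGap m i) (poissonTailGap m m) :=
        le_max_of_rise_persists (a := poissonTailGap m)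
          (fun k hk => poissonTailGap_lt_succ_of_lt (by omega) hk) hij hjm
      _ ≤ 0 := max_le hi.le (poissonTailGap_self_nonpos hm)
  exact exists_single_sign_change (by omega) (poissonTailGap_one_nonneg (by omega)) hsign
end
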